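/- arXiv:1906.00698 — 4 statements merged into one kernel-verified Lean document; each statement's English description precedes it below -/
import Mathlib

section
/- For any vector w ∈ ℝ^n and any s ∈ ℕ with 1 ≤ s ≤ n, the best s-sparse approximation error in ℓ1-norm satisfies inf{‖w - z‖₁ : z is s-sparse} ≤ (1/(4s)) · ‖w‖_{1/2}, where ‖w‖_{1/2} = (Σᵢ |wᵢ|^{1/2})². -/
noncomputable def l1 {n : ℕ} (v : Fin n → ℝ) : ℝ := ∑ i, |v i|
noncomputable def lHalf {n : ℕ} (v : Fin n → ℝ) : ℝ := (∑ i, Real.sqrt |v i|) ^ 2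
def Sparse {n : ℕ} (s : ℕ) (v : Fin n → ℝ) : Prop :=
  (Finset.univ.filter (fun i => v i ≠ 0)).card ≤ s

/-!
Put `a i = √|w i|`, so that `lHalf w = (∑ a)²`, and keep the `s` entries of `w` with the largest
`a i`. If `b` is the smallest kept `a i` and `u` the sum of the discarded ones, the discarded mass
`∑ a i²` is at most `b u`, while `∑ a ≥ s b + u`; AM-GM gives `4 s b u ≤ (s b + u)² ≤ (∑ a)²`.
-/

open Finset

theorem Tuple.exists_card_eq_forall_le_of_notMem {α : Type*} [LinearOrder α] {n : ℕ}
    (a : Fin n → α) {s : ℕ} (hsn : s ≤ n) :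
    ∃ A : Finset (Fin n), #A = s ∧ ∀ i ∉ A, ∀ j ∈ A, a i ≤ a j := by
  -- `σ` lists the indices in decreasing order of `a`
  set σ := Tuple.sort (OrderDual.toDual ∘ a)
  refine ⟨({k : Fin n | k < s} : Finset _).map σ.toEmbedding,
    by simp [Fin.card_filter_val_lt, hsn], ?_⟩
  intro i hi j hj
  simp only [mem_map, mem_filter, mem_univ, true_and, Equiv.coe_toEmbedding] at hi hj
  obtain ⟨l, hls, rfl⟩ := hj
  have hli : l ≤ σ.symm i := by
    by_contra! h
    exact hi ⟨σ.symm i, (Fin.lt_def.mp h).trans hls, by simp⟩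
  simpa [σ] using Tuple.monotone_sort (OrderDual.toDual ∘ a) hli

theorem Finset.four_mul_card_mul_sum_compl_sq_le_sq_sum {ι : Type*} [Fintype ι] [DecidableEq ι]
    {a : ι → ℝ} (ha : ∀ i, 0 ≤ a i) {A : Finset ι} (hA : ∀ i ∉ A, ∀ j ∈ A, a i ≤ a j) :
    4 * #A * ∑ i ∈ Aᶜ, a i ^ 2 ≤ (∑ i, a i) ^ 2 := by
  rcases A.eq_empty_or_nonempty with rfl | hAne
  · simp only [card_empty, Nat.cast_zero, mul_zero, zero_mul]
    positivity
  obtain ⟨j₀, hj₀, hb⟩ := exists_mem_eq_inf' hAne a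
  set b := A.inf' hAne a
  set u := ∑ i ∈ Aᶜ, a i
  have hb₀ : 0 ≤ b := hb ▸ ha j₀
  have hu₀ : 0 ≤ u := sum_nonneg fun i _ => ha i
  have htail : ∑ i ∈ Aᶜ, a i ^ 2 ≤ b * u := by
    rw [mul_sum]
    refine sum_le_sum fun i hi => ?_
    have hib : a i ≤ b := hb ▸ hA i (mem_compl.mp hi) j₀ hj₀
    nlinarith [ha i]
  have hhead : #A * b ≤ ∑ i ∈ A, a i := by
    simpa using card_nsmul_le_sum A a b fun j hj => inf'_le a hj
  have htotal : #A * b + u ≤ ∑ i, a i := by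
    rw [← sum_add_sum_compl A a]
    linarith
  calc 4 * #A * ∑ i ∈ Aᶜ, a i ^ 2 ≤ 4 * #A * (b * u) := by gcongr
    _ = 4 * (#A * b) * u := by ring
    _ ≤ (#A * b + u) ^ 2 := four_mul_le_sq_add _ _
    _ ≤ (∑ i, a i) ^ 2 := by gcongr

theorem sparse_indicator {n s : ℕ} (w : Fin n → ℝ) {A : Finset (Fin n)} (hA : #A ≤ s) :
    Sparse s ((A : Set (Fin n)).indicator w) := by
  refine le_trans (card_le_card fun i hi => ?_) hA
  by_contra h
  simp [h] at hi

theorem l1_sub_indicator {n : ℕ} (w : Fin n → ℝ) (A : Finset (Fin n)) :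
    l1 (w - (A : Set (Fin n)).indicator w) = ∑ i ∈ Aᶜ, |w i| := by
  rw [← Set.indicator_compl, ← coe_compl, l1, ← sum_indicator_subset _ (subset_univ Aᶜ)]
  congr 1 with i
  exact (congrFun (Set.indicator_comp_of_zero (g := fun x : ℝ => |x|) abs_zero) i).symm

theorem exists_sparse_four_mul_l1_sub_le_lHalf {n : ℕ} (w : Fin n → ℝ) (s : ℕ) :
    ∃ z : Fin n → ℝ, Sparse s z ∧ 4 * s * l1 (w - z) ≤ lHalf w := by
  by_cases hsn : s ≤ n
  · set a : Fin n → ℝ := fun i => √|w i|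
    obtain ⟨A, hAs, hA⟩ := Tuple.exists_card_eq_forall_le_of_notMem a hsn
    refine ⟨_, sparse_indicator w hAs.le, ?_⟩
    have hsq : ∀ i, |w i| = a i ^ 2 := fun i => (Real.sq_sqrt (abs_nonneg _)).symm
    calc 4 * s * l1 (w - (A : Set (Fin n)).indicator w) = 4 * #A * ∑ i ∈ Aᶜ, a i ^ 2 := by
          rw [l1_sub_indicator, hAs]
          simp only [hsq]
      _ ≤ (∑ i, a i) ^ 2 :=
          four_mul_card_mul_sum_compl_sq_le_sq_sum (fun i => Real.sqrt_nonneg _) hA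
      _ = lHalf w := rfl
  · refine ⟨w, le_trans (card_le_univ _) (by simpa using (not_le.mp hsn).le), ?_⟩
    simp only [sub_self, l1, Pi.zero_apply, abs_zero, sum_const_zero, mul_zero, lHalf]
    positivity

theorem stmt0_general {n : ℕ} (w : Fin n → ℝ) (s : ℕ) (hs : 1 ≤ s) :
    sInf {t : ℝ | ∃ z : Fin n → ℝ, Sparse s z ∧ t = l1 (w - z)} ≤
      (1 / (4 * (s : ℝ))) * lHalf w := by
  obtain ⟨z, hz, hbound⟩ := exists_sparse_four_mul_l1_sub_le_lHalf w s
  have hbdd : BddBelow {t : ℝ | ∃ z : Fin n → ℝ, Sparse s z ∧ t = l1 (w - z)} :=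
    ⟨0, by rintro _ ⟨z, -, rfl⟩; exact sum_nonneg fun i _ => abs_nonneg _⟩
  have hs₀ : (0 : ℝ) < 4 * s := by positivity
  calc sInf {t : ℝ | ∃ z : Fin n → ℝ, Sparse s z ∧ t = l1 (w - z)} ≤ l1 (w - z) :=
        csInf_le hbdd ⟨z, hz, rfl⟩
    _ ≤ (1 / (4 * (s : ℝ))) * lHalf w := by
        rwa [one_div_mul_eq_div, le_div_iff₀ hs₀, mul_comm]

theorem stmt0 {n : ℕ} (w : Fin n → ℝ) (s : ℕ) (hs : 1 ≤ s) (hsn : s ≤ n) :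
    sInf {t : ℝ | ∃ z : Fin n → ℝ, Sparse s z ∧ t = l1 (w - z)} ≤
      (1 / (4 * (s : ℝ))) * lHalf w :=
  stmt0_general w s hs
end

section
/- Let W ∈ ℝ^{n₁×n₂} be effectively joint s̄-sparse (i.e. ‖W‖_{1,1} ≤ s̄ · ‖W‖_{1,∞}), and let Ŵ be obtained from W by keeping the s columns of largest ℓ1-norm and setting all other columns to zero. Then ‖W - Ŵ‖_{1,∞} ≤ (s̄/s) · ‖W‖_{1,∞}. -/
noncomputable def colL1 {n₁ n₂ : ℕ} (W : Matrix (Fin n₁) (Fin n₂) ℝ) (j : Fin n₂) : ℝ :=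
  ∑ i, |W i j|
noncomputable def m1inf {n₁ n₂ : ℕ} (W : Matrix (Fin n₁) (Fin n₂) ℝ) : ℝ :=
  ⨆ j, colL1 W j
noncomputable def m11 {n₁ n₂ : ℕ} (W : Matrix (Fin n₁) (Fin n₂) ℝ) : ℝ :=
  ∑ j, colL1 W j

theorem stmt5 {n₁ n₂ : ℕ} (W V : Matrix (Fin n₁) (Fin n₂) ℝ) (sbar : ℝ) (s : ℕ)
    (hs : 1 ≤ s) (hsn : s ≤ n₂)
    (hjoint : m11 W ≤ sbar * m1inf W)
    (hV : ∃ T : Finset (Fin n₂), T.card = s ∧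
      (∀ j ∈ T, ∀ i, V i j = W i j) ∧ (∀ j ∉ T, ∀ i, V i j = 0) ∧
      ∀ j ∈ T, ∀ k ∉ T, colL1 W k ≤ colL1 W j) :
    m1inf (W - V) ≤ (sbar / s) * m1inf W := by
  obtain ⟨T, hT, hVT, hVTc, hmax⟩ := hV
  have hn2 : 0 < n₂ := lt_of_lt_of_le hs hsn
  haveI : Nonempty (Fin n₂) := ⟨⟨0, hn2⟩⟩
  have hspos : (0:ℝ) < (s:ℝ) := by exact_mod_cast hs
  have hcol : ∀ j, 0 ≤ colL1 W j := fun j => Finset.sum_nonneg fun i _ => abs_nonneg _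
  have hm11 : 0 ≤ m11 W := Finset.sum_nonneg fun j _ => hcol j
  have hRHS : 0 ≤ (sbar / s) * m1inf W := by
    rw [div_mul_eq_mul_div]
    exact div_nonneg (le_trans hm11 hjoint) hspos.le
  apply ciSup_le
  intro j
  by_cases hj : j ∈ T
  · have h0 : colL1 (W - V) j = 0 := by
      unfold colL1
      simp [Matrix.sub_apply, hVT j hj]
    rw [h0]; exact hRHS
  · have heq : colL1 (W - V) j = colL1 W j := by
      unfold colL1
      simp [Matrix.sub_apply, hVTc j hj]
    rw [heq]
    have h1 : (s:ℝ) * colL1 W j ≤ ∑ k ∈ T, colL1 W k := by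
      calc (s:ℝ) * colL1 W j = ∑ _k ∈ T, colL1 W j := by
            rw [Finset.sum_const, hT, nsmul_eq_mul]
        _ ≤ ∑ k ∈ T, colL1 W k :=
            Finset.sum_le_sum fun k hk => hmax k hk j hj
    have h2 : ∑ k ∈ T, colL1 W k ≤ m11 W :=
      Finset.sum_le_sum_of_subset_of_nonneg (Finset.subset_univ T) fun k _ _ => hcol k
    have h3 : (s:ℝ) * colL1 W j ≤ sbar * m1inf W := le_trans h1 (le_trans h2 hjoint)
    rw [div_mul_eq_mul_div, le_div_iff₀ hspos, mul_comm]
    exact h3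
end

section
/- Let w ∈ ℝ^n be effectively s̄-sparse, i.e. ‖w‖_{1/2} ≤ s̄ ‖w‖₁, with ‖w‖₁ ≤ 1. Let ε, γ > 0, set s = ⌈s̄(1+ε)/(2γ)⌉, and let w' be the s-sparse vector keeping the s largest absolute entries of w. Then for all x with ‖x‖_∞ ≤ 1: |(⟨w, x⟩ - ε‖w‖₁) - (⟨w', x⟩ - ε‖w'‖₁)| ≤ γ/2. -/
/-- `z` keeps the `s` absolutely largest entries of `w` and sets the others to zero. -/
def KeepsTop {n : ℕ} (s : ℕ) (w z : Fin n → ℝ) : Prop :=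
  ∃ T : Finset (Fin n), T.card = s ∧ (∀ i ∈ T, z i = w i) ∧ (∀ i ∉ T, z i = 0) ∧
    ∀ i ∈ T, ∀ j ∉ T, |w j| ≤ |w i|

theorem stmt8 {n : ℕ} (w w' : Fin n → ℝ) (sbar ε γ : ℝ) (s : ℕ)
    (hsbar : 1 ≤ sbar) (hε : 0 < ε) (hγ : 0 < γ)
    (heff : lHalf w ≤ sbar * l1 w) (hw1 : l1 w ≤ 1)
    (hs : s = ⌈sbar * (1 + ε) / (2 * γ)⌉₊) (hsn : s ≤ n)
    (hw' : KeepsTop s w w') :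
    ∀ x : Fin n → ℝ, (∀ i, |x i| ≤ 1) →
      |((∑ i, w i * x i) - ε * l1 w) - ((∑ i, w' i * x i) - ε * l1 w')| ≤ γ / 2 := by
  obtain ⟨T, hTcard, hzT, hzTc, hmax⟩ := hw'
  intro x hx
  have hspos : 0 < s := by
    rw [hs]
    apply Nat.ceil_pos.mpr
    positivity
  set A := ∑ i ∈ T, Real.sqrt |w i| with hA
  set B := ∑ i ∈ Tᶜ, Real.sqrt |w i| with hB
  set D := ∑ i ∈ Tᶜ, |w i| with hD
  have hA0 : 0 ≤ A := Finset.sum_nonneg fun i _ => Real.sqrt_nonneg _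
  have hB0 : 0 ≤ B := Finset.sum_nonneg fun i _ => Real.sqrt_nonneg _
  have hD0 : 0 ≤ D := Finset.sum_nonneg fun i _ => abs_nonneg _
  -- l1 decomposition
  have hl1 : l1 w = (∑ i ∈ T, |w i|) + D := (Finset.sum_add_sum_compl T _).symm
  have hl1' : l1 w' = ∑ i ∈ T, |w i| := by
    rw [l1, ← Finset.sum_add_sum_compl T]
    have h1 : ∑ i ∈ Tᶜ, |w' i| = 0 :=
      Finset.sum_eq_zero fun i hi => by rw [hzTc i (Finset.mem_compl.mp hi), abs_zero]
    rw [h1, add_zero]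
    exact Finset.sum_congr rfl fun i hi => by rw [hzT i hi]
  -- sum difference
  have hsum : (∑ i, w i * x i) - (∑ i, w' i * x i) = ∑ i ∈ Tᶜ, w i * x i := by
    rw [← Finset.sum_sub_distrib, ← Finset.sum_add_sum_compl T (fun i => w i * x i - w' i * x i)]
    have h1 : ∑ i ∈ T, (w i * x i - w' i * x i) = 0 :=
      Finset.sum_eq_zero fun i hi => by rw [hzT i hi, sub_self]
    rw [h1, zero_add]
    exact Finset.sum_congr rfl fun i hi => by
      rw [hzTc i (Finset.mem_compl.mp hi), zero_mul, sub_zero]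
  have habs : |∑ i ∈ Tᶜ, w i * x i| ≤ D := by
    calc |∑ i ∈ Tᶜ, w i * x i| ≤ ∑ i ∈ Tᶜ, |w i * x i| := Finset.abs_sum_le_sum_abs _ _
    _ ≤ D := Finset.sum_le_sum fun i _ => by
        rw [abs_mul]
        calc |w i| * |x i| ≤ |w i| * 1 := by
              exact mul_le_mul_of_nonneg_left (hx i) (abs_nonneg _)
        _ = |w i| := mul_one _
  -- key sparse approximation bound : s * D ≤ A * B
  have hsD : (s : ℝ) * D ≤ A * B := by
    rw [Finset.mul_sum]
    have : A * B = ∑ i ∈ Tᶜ, A * Real.sqrt |w i| := by rw [← Finset.mul_sum]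
    rw [this]
    apply Finset.sum_le_sum
    intro i hi
    have hmin : (s : ℝ) * Real.sqrt |w i| ≤ A := by
      have : ∑ _j ∈ T, Real.sqrt |w i| ≤ A :=
        Finset.sum_le_sum fun j hj =>
          Real.sqrt_le_sqrt (hmax j hj i (Finset.mem_compl.mp hi))
      simpa [Finset.sum_const, hTcard, nsmul_eq_mul] using this
    calc (s : ℝ) * |w i| = ((s : ℝ) * Real.sqrt |w i|) * Real.sqrt |w i| := by
          rw [mul_assoc, Real.mul_self_sqrt (abs_nonneg _)]
    _ ≤ A * Real.sqrt |w i| :=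
        mul_le_mul_of_nonneg_right hmin (Real.sqrt_nonneg _)
  -- (A+B)^2 = lHalf w ≤ sbar
  have hlh : (A + B) ^ 2 = lHalf w := by
    rw [lHalf, hA, hB, Finset.sum_add_sum_compl]
  have hlhs : (A + B) ^ 2 ≤ sbar := by
    rw [hlh]
    calc lHalf w ≤ sbar * l1 w := heff
    _ ≤ sbar * 1 := mul_le_mul_of_nonneg_left hw1 (by linarith)
    _ = sbar := mul_one _
  -- ceiling bound
  have hceil : sbar * (1 + ε) ≤ 2 * γ * s := by
    have h1 : sbar * (1 + ε) / (2 * γ) ≤ (s : ℝ) := by rw [hs]; exact Nat.le_ceil _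
    have h2 : (0 : ℝ) < 2 * γ := by linarith
    calc sbar * (1 + ε) = sbar * (1 + ε) / (2 * γ) * (2 * γ) := by field_simp
    _ ≤ (s : ℝ) * (2 * γ) := mul_le_mul_of_nonneg_right h1 (le_of_lt h2)
    _ = 2 * γ * s := by ring
  have hspos' : (0 : ℝ) < s := by exact_mod_cast hspos
  -- conclude
  have hεD : (1 + ε) * D ≤ γ / 2 := by
    nlinarith [sq_nonneg (A - B), mul_le_mul_of_nonneg_left hsD (le_of_lt hε),
      mul_le_mul_of_nonneg_left hlhs (le_of_lt hε), mul_pos hspos' hγ]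
  have hexpr : ((∑ i, w i * x i) - ε * l1 w) - ((∑ i, w' i * x i) - ε * l1 w')
      = (∑ i ∈ Tᶜ, w i * x i) - ε * D := by
    rw [← hsum, hl1, hl1']; ring
  rw [hexpr]
  calc |(∑ i ∈ Tᶜ, w i * x i) - ε * D| ≤ |∑ i ∈ Tᶜ, w i * x i| + |ε * D| := abs_sub _ _
  _ ≤ D + ε * D := by
      rw [abs_of_nonneg (mul_nonneg (le_of_lt hε) hD0)]
      linarith
  _ = (1 + ε) * D := by ring
  _ ≤ γ / 2 := hεD
end

section
/- Let w ∈ ℝ^n with ‖w‖₁ ≤ 1, x ∈ ℝ^n with ‖x‖_∞ ≤ 1, ε, γ > 0, δ ∈ (0,1]. Let ŵᵢ = zᵢwᵢ/pᵢ with independent zᵢ ∼ Bern(pᵢ) and pᵢ = |wᵢ|(1+ε)²/(δγ²) (assumed ≤ 1). Then Var(⟨ŵ, x⟩ - ε‖ŵ‖₁) ≤ δγ², and consequently by Chebyshev's inequality ℙ[|(⟨ŵ,x⟩ - ε‖ŵ‖₁) - (⟨w,x⟩ - ε‖w‖₁)| > γ] ≤ δ. -/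
/-! Since `zᵢ ∈ {0, 1}` and `pᵢ ≥ 0`, the `i`-th summand of `⟨ŵ, x⟩ - ε‖ŵ‖₁` is `zᵢ cᵢ` with
`cᵢ = (wᵢxᵢ - ε|wᵢ|) / pᵢ`. The estimator is therefore a linear combination of independent
Bernoulli variables, with mean `⟨w, x⟩ - ε‖w‖₁` and variance
`∑ cᵢ² pᵢ(1 - pᵢ) ≤ ∑ (wᵢxᵢ - ε|wᵢ|)² / pᵢ ≤ ∑ |wᵢ| δγ² ≤ δγ²`,
because `|wᵢxᵢ - ε|wᵢ|| ≤ |wᵢ|(1 + ε)`. Chebyshev's inequality then gives the tail bound. -/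

open MeasureTheory ProbabilityTheory Finset

-- `p = 0` is allowed: both sides then vanish because `a / 0 = 0`.
lemma sparsify_mul_sub_abs_eq {z w p : ℝ} (x ε : ℝ) (hz : z = 0 ∨ z = 1) (hp : 0 ≤ p) :
    (if w = 0 then 0 else z * w / p) * x - ε * |if w = 0 then 0 else z * w / p| =
      z * ((w * x - ε * |w|) / p) := by
  rcases hz with rfl | rfl
  · simp
  · split_ifs with hw
    · simp [hw]
    · rw [one_mul, one_mul, abs_div, abs_of_nonneg hp]
      ring

lemma sum_sparsify_mul_sub_abs_eq {ι : Type*} [Fintype ι] {z w p : ι → ℝ} (x : ι → ℝ) (ε : ℝ)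
    (hz : ∀ i, z i = 0 ∨ z i = 1) (hp : ∀ i, 0 ≤ p i) :
    (∑ i, (if w i = 0 then 0 else z i * w i / p i) * x i) -
        ε * ∑ i, |if w i = 0 then 0 else z i * w i / p i| =
      ∑ i, (w i * x i - ε * |w i|) / p i * z i := by
  rw [mul_sum, ← sum_sub_distrib]
  exact sum_congr rfl fun i _ ↦ (sparsify_mul_sub_abs_eq _ _ (hz i) (hp i)).trans (mul_comm _ _)

lemma abs_mul_sub_mul_abs_le {w x ε : ℝ} (hx : |x| ≤ 1) (hε : 0 ≤ ε) :
    |(w * x - ε * |w|)| ≤ |w| * (1 + ε) :=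
  calc _ ≤ |w * x| + |(ε * |w|)| := abs_sub _ _
    _ = |w| * |x| + ε * |w| := by rw [abs_mul, abs_mul, abs_abs, abs_of_nonneg hε]
    _ ≤ |w| * 1 + ε * |w| := by gcongr
    _ = |w| * (1 + ε) := by ring

lemma div_sq_mul_le_of_eq_abs_mul_div {w x ε p K : ℝ} (hx : |x| ≤ 1) (hε : 0 ≤ ε) (hK : 0 < K)
    (hp : p = |w| * (1 + ε) ^ 2 / K) :
    ((w * x - ε * |w|) / p) ^ 2 * p ≤ |w| * K := by
  rcases eq_or_ne w 0 with hw | hw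
  · simp [hw]
  have hp0 : 0 < p := hp ▸ by positivity
  have hKp : |w| * K * p = (|w| * (1 + ε)) ^ 2 := by
    rw [hp]
    field_simp
  calc ((w * x - ε * |w|) / p) ^ 2 * p = (w * x - ε * |w|) ^ 2 / p := by field_simp
    _ ≤ |w| * K := by
      rw [div_le_iff₀ hp0, hKp, sq_le_sq]
      exact (abs_mul_sub_mul_abs_le hx hε).trans (le_abs_self _)

lemma div_mul_cancel_of_eq_abs_mul_div {w x ε p K : ℝ} (hε : 0 ≤ ε) (hK : 0 < K)
    (hp : p = |w| * (1 + ε) ^ 2 / K) :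
    (w * x - ε * |w|) / p * p = w * x - ε * |w| := by
  rcases eq_or_ne w 0 with hw | hw
  · simp [hw]
  · exact div_mul_cancel₀ _ (hp ▸ by positivity)

namespace ProbabilityTheory

variable {Ω : Type*} {mΩ : MeasurableSpace Ω} {μ : Measure Ω}

lemma variance_le_integral_of_mem_Icc_zero_one [IsProbabilityMeasure μ] {X : Ω → ℝ}
    (hX : AEMeasurable X μ) (h : ∀ᵐ ω ∂μ, X ω ∈ Set.Icc 0 1) : Var[X; μ] ≤ μ[X] := by
  have hBD := variance_le_sub_mul_sub h hX
  nlinarith [sq_nonneg μ[X]]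

lemma iIndepFun.variance_sum_const_mul {ι : Type*} {X : ι → Ω → ℝ} (h : iIndepFun X μ)
    (hX : ∀ i, MemLp (X i) 2 μ) (c : ι → ℝ) (s : Finset ι) :
    Var[fun ω ↦ ∑ i ∈ s, c i * X i ω; μ] = ∑ i ∈ s, c i ^ 2 * Var[X i; μ] := by
  have hsum : (fun ω ↦ ∑ i ∈ s, c i * X i ω) = ∑ i ∈ s, fun ω ↦ c i * X i ω := by
    ext ω
    simp
  rw [hsum, IndepFun.variance_sum (fun i _ ↦ (hX i).const_mul (c i))
    fun i _ j _ hij ↦ (h.indepFun hij).comp (measurable_const_mul _) (measurable_const_mul _)]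
  simp only [variance_const_mul]

lemma iIndepFun.variance_sum_const_mul_le_of_mem_Icc [IsProbabilityMeasure μ] {ι : Type*}
    {X : ι → Ω → ℝ} (h : iIndepFun X μ) (hX : ∀ i, AEMeasurable (X i) μ)
    (h01 : ∀ i, ∀ᵐ ω ∂μ, X i ω ∈ Set.Icc 0 1) (c : ι → ℝ) (s : Finset ι) :
    Var[fun ω ↦ ∑ i ∈ s, c i * X i ω; μ] ≤ ∑ i ∈ s, c i ^ 2 * μ[X i] := by
  rw [h.variance_sum_const_mul (fun i ↦ memLp_of_bounded (h01 i) (hX i).aestronglyMeasurable 2)]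
  gcongr with i
  exact variance_le_integral_of_mem_Icc_zero_one (hX i) (h01 i)

lemma meas_lt_abs_sub_integral_le_of_variance_le [IsFiniteMeasure μ] {X : Ω → ℝ}
    (hX : MemLp X 2 μ) {c δ : ℝ} (hc : 0 < c) (hvar : Var[X; μ] ≤ δ * c ^ 2) :
    μ {ω | c < |X ω - μ[X]|} ≤ ENNReal.ofReal δ :=
  calc μ {ω | c < |X ω - μ[X]|}
      ≤ μ {ω | c ≤ |X ω - μ[X]|} := measure_mono (Set.ofPred_subset_ofPred.mpr fun _ ↦ le_of_lt)
    _ ≤ ENNReal.ofReal (Var[X; μ] / c ^ 2) := meas_ge_le_variance_div_sq hX hc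
    _ ≤ ENNReal.ofReal δ := ENNReal.ofReal_le_ofReal <| by
        rwa [div_le_iff₀ (by positivity)]

end ProbabilityTheory

theorem stmt13_general {n : ℕ} {Ω : Type*} [MeasureSpace Ω] [IsProbabilityMeasure (ℙ : Measure Ω)]
    (w x : Fin n → ℝ) (hw : ∑ i, |w i| ≤ 1) (hx : ∀ i, |x i| ≤ 1)
    (ε γ δ : ℝ) (hε : 0 < ε) (hγ : 0 < γ) (hδ : 0 < δ ∧ δ ≤ 1)
    (p : Fin n → ℝ) (hp : ∀ i, p i = |w i| * (1 + ε) ^ 2 / (δ * γ ^ 2))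
    (z : Fin n → Ω → ℝ)
    (hz01 : ∀ i ω, z i ω = 0 ∨ z i ω = 1)
    (hmeas : ∀ i, Measurable (z i))
    (hmean : ∀ i, ∫ ω, z i ω = p i)
    (hindep : iIndepFun z ℙ) :
    variance (fun ω =>
        (∑ i, (if w i = 0 then 0 else z i ω * w i / p i) * x i) -
          ε * ∑ i, |if w i = 0 then 0 else z i ω * w i / p i|) ℙ ≤ δ * γ ^ 2 ∧
    ℙ {ω | γ <
        |((∑ i, (if w i = 0 then 0 else z i ω * w i / p i) * x i) -
            ε * ∑ i, |if w i = 0 then 0 else z i ω * w i / p i|) -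
          ((∑ i, w i * x i) - ε * ∑ i, |w i|)|} ≤ ENNReal.ofReal δ := by
  have hK : 0 < δ * γ ^ 2 := by have := hδ.1; positivity
  set c : Fin n → ℝ := fun i ↦ (w i * x i - ε * |w i|) / p i
  have hzIcc : ∀ i, ∀ᵐ ω ∂ℙ, z i ω ∈ Set.Icc (0 : ℝ) 1 := fun i ↦ ae_of_all _ fun ω ↦ by
    rcases hz01 i ω with h | h <;> simp [h]
  have hzLp : ∀ i, MemLp (z i) 2 ℙ := fun i ↦
    memLp_of_bounded (hzIcc i) (hmeas i).aestronglyMeasurable 2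
  have hvar : Var[fun ω ↦ ∑ i, c i * z i ω; ℙ] ≤ δ * γ ^ 2 :=
    calc Var[fun ω ↦ ∑ i, c i * z i ω; ℙ]
        ≤ ∑ i, c i ^ 2 * p i := by
          simpa only [hmean] using hindep.variance_sum_const_mul_le_of_mem_Icc
            (fun i ↦ (hmeas i).aemeasurable) hzIcc c univ
      _ ≤ ∑ i, |w i| * (δ * γ ^ 2) :=
          sum_le_sum fun i _ ↦ div_sq_mul_le_of_eq_abs_mul_div (hx i) hε.le hK (hp i)
      _ ≤ δ * γ ^ 2 := by rw [← sum_mul]; exact mul_le_of_le_one_left hK.le hw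
  have hexp : ∫ ω, ∑ i, c i * z i ω = (∑ i, w i * x i) - ε * ∑ i, |w i| := by
    rw [integral_finsetSum _ fun i _ ↦ ((hzLp i).integrable one_le_two).const_mul (c i),
      mul_sum, ← sum_sub_distrib]
    simp_rw [integral_const_mul, hmean, c, div_mul_cancel_of_eq_abs_mul_div hε.le hK (hp _)]
  simp_rw [sum_sparsify_mul_sub_abs_eq x ε (hz01 · _) fun i ↦ (hp i ▸ by positivity : 0 ≤ p i),
    ← hexp]
  exact ⟨hvar, meas_lt_abs_sub_integral_le_of_variance_le
    (memLp_finsetSum _ fun i _ ↦ (hzLp i).const_mul (c i)) hγ hvar⟩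

theorem stmt13 {n : ℕ} {Ω : Type*} [MeasureSpace Ω] [IsProbabilityMeasure (ℙ : Measure Ω)]
    (w x : Fin n → ℝ) (hw : ∑ i, |w i| ≤ 1) (hx : ∀ i, |x i| ≤ 1)
    (ε γ δ : ℝ) (hε : 0 < ε) (hγ : 0 < γ) (hδ : 0 < δ ∧ δ ≤ 1)
    (p : Fin n → ℝ) (hp : ∀ i, p i = |w i| * (1 + ε) ^ 2 / (δ * γ ^ 2))
    (hp1 : ∀ i, p i ≤ 1)
    (z : Fin n → Ω → ℝ)
    (hz01 : ∀ i ω, z i ω = 0 ∨ z i ω = 1)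
    (hmeas : ∀ i, Measurable (z i))
    (hmean : ∀ i, ∫ ω, z i ω = p i)
    (hindep : iIndepFun z ℙ) :
    variance (fun ω =>
        (∑ i, (if w i = 0 then 0 else z i ω * w i / p i) * x i) -
          ε * ∑ i, |if w i = 0 then 0 else z i ω * w i / p i|) ℙ ≤ δ * γ ^ 2 ∧
    ℙ {ω | γ <
        |((∑ i, (if w i = 0 then 0 else z i ω * w i / p i) * x i) -
            ε * ∑ i, |if w i = 0 then 0 else z i ω * w i / p i|) -
          ((∑ i, w i * x i) - ε * ∑ i, |w i|)|} ≤ ENNReal.ofReal δ :=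
  stmt13_general w x hw hx ε γ δ hε hγ hδ p hp z hz01 hmeas hmean hindep
end
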